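/- arXiv:2106.10717 — 3 statements merged into one kernel-verified Lean document; each statement's English description precedes it below -/
import Mathlib

section
/- Let f : ℝ → ℝ be four times differentiable with strictly positive fourth derivative, and let τ > 0. With s = √τ/2, define φ₀(R) = (f(R−2s) + f(R+2s))/2 and φ₁(R) = (1/16)∑_{j=0}^{4} C(4,j) f(R + (2j−4)s), i.e. φ₁(R) = (1/16)[f(R−2√τ) + 4f(R−√τ) + 6f(R) + 4f(R+√τ) + f(R+2√τ)]. Then φ₁(R) > φ₀(R) for all R. -/
/-- Strict midpoint inequality from positive second derivative. -/
lemma quad_aux (g : ℝ → ℝ) (hc : Continuous g)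
    (hg2 : ∀ x, 0 < deriv (deriv g) x) (x h : ℝ) (hh : 0 < h) :
    2 * g x < g (x - h) + g (x + h) := by
  have hconv : StrictConvexOn ℝ Set.univ g :=
    strictConvexOn_univ_of_deriv2_pos hc (by
      intro y
      have : deriv^[2] g y = deriv (deriv g) y := by
        simp [Function.iterate_succ_apply']
      rw [this]; exact hg2 y)
  have hne : x - h ≠ x + h := by intro hcon; linarith
  have hlt := hconv.2 (Set.mem_univ (x - h)) (Set.mem_univ (x + h)) hne
    (by norm_num : (0:ℝ) < 1/2) (by norm_num : (0:ℝ) < 1/2) (by norm_num)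
  have heq : (1/2 : ℝ) • (x - h) + (1/2 : ℝ) • (x + h) = x := by
    simp only [smul_eq_mul]; ring
  rw [heq] at hlt
  simp only [smul_eq_mul] at hlt
  linarith

lemma derivT (g : ℝ → ℝ) (hg : Differentiable ℝ g) (c : ℝ) :
    deriv (fun x => g (x + c) + g (x - c) - 2 * g x)
      = fun x => deriv g (x + c) + deriv g (x - c) - 2 * deriv g x := by
  funext x
  have h1 : DifferentiableAt ℝ (fun x : ℝ => g (x + c)) x :=
    (hg (x + c)).comp x ((differentiableAt_id).add_const c)
  have h2 : DifferentiableAt ℝ (fun x : ℝ => g (x - c)) x :=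
    (hg (x - c)).comp x ((differentiableAt_id).sub_const c)
  have h3 : DifferentiableAt ℝ (fun x : ℝ => 2 * g x) x := (hg x).const_mul 2
  rw [deriv_fun_sub (f := fun y => g (y + c) + g (y - c)) (h1.add h2) h3, deriv_fun_add h1 h2, deriv_const_mul 2 (hg x),
    deriv_comp_add_const, deriv_comp_sub_const]

/-- Half-step lemma: let `s = √τ/2` with `τ > 0`. If `f` has a strictly
positive fourth derivative, then the expected potential after four symmetric
`±s` steps, `φ₁ R = (1/16)(f(R−4s) + 4 f(R−2s) + 6 f R + 4 f(R+2s) + f(R+4s))`,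
strictly exceeds the expected potential after one symmetric `±2s` step,
`φ₀ R = (f(R−2s) + f(R+2s))/2`. -/
theorem stmt_5 (f : ℝ → ℝ) (hsmooth : ContDiff ℝ 4 f)
    (h4 : ∀ x, 0 < iteratedDeriv 4 f x) (τ : ℝ) (hτ : 0 < τ) :
    ∀ R : ℝ, (f (R - 2 * (Real.sqrt τ / 2)) + f (R + 2 * (Real.sqrt τ / 2))) / 2 <
      (1 / 16) * (f (R - 4 * (Real.sqrt τ / 2)) + 4 * f (R - 2 * (Real.sqrt τ / 2))
        + 6 * f R + 4 * f (R + 2 * (Real.sqrt τ / 2)) + f (R + 4 * (Real.sqrt τ / 2))) := by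
  intro R
  set s : ℝ := Real.sqrt τ / 2 with hs
  have hspos : 0 < s := by
    have := Real.sqrt_pos.mpr hτ
    positivity
  have hc : 0 < 2 * s := by linarith
  -- differentiability facts
  have hdf : Differentiable ℝ f := hsmooth.differentiable (by norm_num)
  have hdf1 : Differentiable ℝ (deriv f) := by
    have := hsmooth.differentiable_iteratedDeriv 1 (by norm_num)
    rwa [iteratedDeriv_one] at this
  have h2eq : iteratedDeriv 2 f = deriv (deriv f) := by
    rw [show (2:ℕ) = 1 + 1 from rfl, iteratedDeriv_succ, iteratedDeriv_one]
  have h4eq : iteratedDeriv 4 f = deriv (deriv (iteratedDeriv 2 f)) := by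
    rw [show (4:ℕ) = 2 + 1 + 1 from rfl, iteratedDeriv_succ, iteratedDeriv_succ]
  have cont2 : Continuous (iteratedDeriv 2 f) :=
    hsmooth.continuous_iteratedDeriv 2 (by norm_num)
  -- second derivative of P is positive
  set P : ℝ → ℝ := fun x => f (x + 2*s) + f (x - 2*s) - 2 * f x with hP
  have contP : Continuous P := by
    apply Continuous.sub
    · exact (hdf.continuous.comp (continuous_id.add continuous_const)).add
        (hdf.continuous.comp (continuous_id.sub continuous_const))
    · exact continuous_const.mul hdf.continuous
  have hd1 : deriv P = fun x => deriv f (x + 2*s) + deriv f (x - 2*s) - 2 * deriv f x :=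
    derivT f hdf (2*s)
  have hd2 : deriv (deriv P) = fun x =>
      deriv (deriv f) (x + 2*s) + deriv (deriv f) (x - 2*s) - 2 * deriv (deriv f) x := by
    rw [hd1]; exact derivT (deriv f) hdf1 (2*s)
  have d2pos : ∀ x, 0 < deriv (deriv P) x := by
    intro x
    have hq := quad_aux (iteratedDeriv 2 f) cont2
      (fun y => by rw [← h4eq]; exact h4 y) x (2*s) hc
    rw [h2eq] at hq
    rw [hd2]
    simp only []
    linarith
  have key := quad_aux P contP d2pos R (2*s) hc
  have e1 : R - 2*s + 2*s = R := by ring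
  have e2 : R - 2*s - 2*s = R - 4*s := by ring
  have e3 : R + 2*s + 2*s = R + 4*s := by ring
  have e4 : R + 2*s - 2*s = R := by ring
  simp only [hP, e1, e2, e3, e4] at key
  linarith
end

section
/- If f : [a,b] → ℝ is n-times differentiable with f^{(n)} ≥ 0 on [a,b], then for any n+1 distinct points a ≤ x₀ < x₁ < ⋯ < xₙ ≤ b, the n-th order divided difference [x₀,…,xₙ;f] is ≥ 0. -/
/-!
Let `p` be the polynomial of degree `≤ n` interpolating `f` at `x₀, …, xₙ`. Neville's recursion
for `p` mirrors the recursion of divided differences, so the coefficient of `Xⁿ` in `p` is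
`[x₀,…,xₙ;f]`. Since `f - p` vanishes at the `n + 1` nodes, Rolle's theorem applied `n` times
gives `ξ` with `f⁽ⁿ⁾(ξ) = p⁽ⁿ⁾(ξ) = n! [x₀,…,xₙ;f]`, and the sign of `f⁽ⁿ⁾(ξ)` decides.
-/

/-- The divided difference of `f` at `n+1` points, defined recursively. -/
noncomputable def divDiff (f : ℝ → ℝ) : (n : ℕ) → (Fin (n + 1) → ℝ) → ℝ
  | 0, x => f (x 0)
  | n + 1, x =>
      (divDiff f n (fun i => x i.succ) - divDiff f n (fun i => x i.castSucc)) /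
        (x (Fin.last (n + 1)) - x 0)

open Polynomial Set
open scoped Nat

namespace Polynomial

theorem iterate_derivative_of_natDegree_le {R : Type*} [Semiring R] {p : R[X]} {n : ℕ}
    (hp : p.natDegree ≤ n) : derivative^[n] p = C ((n ! : R) * p.coeff n) := by
  rw [eq_C_of_natDegree_le_zero ((natDegree_iterate_derivative p n).trans (by omega)),
    coeff_iterate_derivative, zero_add, Nat.descFactorial_self, nsmul_eq_mul]

theorem iteratedDeriv_eval {𝕜 : Type*} [NontriviallyNormedField 𝕜] (p : 𝕜[X]) (n : ℕ) :
    iteratedDeriv n (fun t => p.eval t) = fun t => (derivative^[n] p).eval t := by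
  induction n generalizing p with
  | zero => rfl
  | succ n ih =>
    have hderiv : deriv (fun t => p.eval t) = fun t => p.derivative.eval t := by
      ext t; exact p.deriv
    rw [iteratedDeriv_succ', hderiv, ih, Function.iterate_succ_apply]

theorem iteratedDerivWithin_eval {𝕜 : Type*} [NontriviallyNormedField 𝕜] {s : Set 𝕜} {t : 𝕜}
    (hs : UniqueDiffOn 𝕜 s) (ht : t ∈ s) (p : 𝕜[X]) (n : ℕ) :
    iteratedDerivWithin n (fun t => p.eval t) s t = (derivative^[n] p).eval t := by
  have hp : ContDiff 𝕜 n fun t => p.eval t := by simpa using p.contDiff_aeval (𝕜 := 𝕜) n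
  rw [iteratedDerivWithin_eq_iteratedDeriv hs hp.contDiffAt ht, iteratedDeriv_eval]

end Polynomial

/-- The Neville–Aitken interpolation polynomial of `f` at the nodes `x`. -/
noncomputable def nevillePoly (f : ℝ → ℝ) : (n : ℕ) → (Fin (n + 1) → ℝ) → ℝ[X]
  | 0, x => C (f (x 0))
  | n + 1, x =>
      C (x (Fin.last (n + 1)) - x 0)⁻¹ *
        ((X - C (x 0)) * nevillePoly f n (fun i => x i.succ) +
          (C (x (Fin.last (n + 1))) - X) * nevillePoly f n (fun i => x i.castSucc))

namespace nevillePoly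

variable (f : ℝ → ℝ)

theorem natDegree_le : ∀ (n : ℕ) (x : Fin (n + 1) → ℝ), (nevillePoly f n x).natDegree ≤ n
  | 0, x => by simp [nevillePoly]
  | n + 1, x => by
    rw [nevillePoly]
    refine (natDegree_C_mul_le _ _).trans (natDegree_add_le_of_degree_le ?_ ?_)
    · exact natDegree_mul_le_of_le (natDegree_X_sub_C_le _) (natDegree_le n _) |>.trans_eq
        (add_comm _ _)
    · rw [← neg_sub, neg_mul, natDegree_neg]
      exact natDegree_mul_le_of_le (natDegree_X_sub_C_le _) (natDegree_le n _) |>.trans_eq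
        (add_comm _ _)

theorem coeff_self :
    ∀ (n : ℕ) (x : Fin (n + 1) → ℝ), (nevillePoly f n x).coeff n = divDiff f n x
  | 0, x => by simp [nevillePoly, divDiff]
  | n + 1, x => by
    have hq := natDegree_le f n (fun i => x i.succ)
    have hr := natDegree_le f n (fun i => x i.castSucc)
    rw [nevillePoly, divDiff, coeff_C_mul, div_eq_inv_mul, ← coeff_self n, ← coeff_self n]
    simp only [sub_mul, coeff_add, coeff_sub, coeff_X_mul, coeff_C_mul,
      coeff_eq_zero_of_natDegree_lt (Nat.lt_succ_of_le hq),
      coeff_eq_zero_of_natDegree_lt (Nat.lt_succ_of_le hr)]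
    ring

theorem eval_node : ∀ {n : ℕ} {x : Fin (n + 1) → ℝ}, Function.Injective x →
    ∀ i, (nevillePoly f n x).eval (x i) = f (x i)
  | 0, x, _, i => by simp [nevillePoly, Fin.fin_one_eq_zero i]
  | n + 1, x, hx, i => by
    have hq : (x i - x 0) * (nevillePoly f n (fun j => x j.succ)).eval (x i) =
        (x i - x 0) * f (x i) := by
      rcases eq_or_ne i 0 with rfl | hi
      · simp
      obtain ⟨j, rfl⟩ := Fin.exists_succ_eq.2 hi
      exact congrArg _ (eval_node (x := fun j => x j.succ) (hx.comp (Fin.succ_injective _)) j)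
    have hr : (x (Fin.last _) - x i) * (nevillePoly f n (fun j => x j.castSucc)).eval (x i) =
        (x (Fin.last _) - x i) * f (x i) := by
      rcases eq_or_ne i (Fin.last _) with rfl | hi
      · simp
      obtain ⟨j, rfl⟩ := Fin.exists_castSucc_eq.2 hi
      exact congrArg _
        (eval_node (x := fun j => x j.castSucc) (hx.comp (Fin.castSucc_injective _)) j)
    have hne : x (Fin.last (n + 1)) - x 0 ≠ 0 := sub_ne_zero.2 (hx.ne Fin.last_pos.ne')
    simp only [nevillePoly, eval_mul, eval_add, eval_sub, eval_C, eval_X, hq, hr]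
    field_simp
    ring

end nevillePoly

theorem exists_strictMono_zeros_derivWithin {n : ℕ} {a b : ℝ} {g : ℝ → ℝ}
    (hg : ContinuousOn g (Icc a b)) {x : Fin (n + 2) → ℝ} (hx : StrictMono x)
    (hxI : ∀ i, x i ∈ Icc a b) (hz : ∀ i, g (x i) = 0) :
    ∃ c : Fin (n + 1) → ℝ, StrictMono c ∧ (∀ i, c i ∈ Icc a b) ∧
      ∀ i, derivWithin g (Icc a b) (c i) = 0 := by
  have hrolle (i : Fin (n + 1)) : ∃ c ∈ Ioo (x i.castSucc) (x i.succ), deriv g c = 0 :=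
    exists_deriv_eq_zero (hx Fin.castSucc_lt_succ)
      (hg.mono (Icc_subset_Icc (hxI _).1 (hxI _).2)) (by rw [hz, hz])
  choose c hcx hc using hrolle
  have hcI (i : Fin (n + 1)) : c i ∈ Ioo a b :=
    ⟨(hxI _).1.trans_lt (hcx i).1, (hcx i).2.trans_le (hxI _).2⟩
  refine ⟨c, Fin.strictMono_iff_lt_succ.2 fun i => (hcx i.castSucc).2.trans (hcx i.succ).1,
    fun i => Ioo_subset_Icc_self (hcI i), fun i => ?_⟩
  rw [derivWithin_of_mem_nhds (Icc_mem_nhds (hcI i).1 (hcI i).2), hc]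

theorem exists_iteratedDerivWithin_eq_zero {a b : ℝ} (hab : a < b) :
    ∀ {n : ℕ} {g : ℝ → ℝ}, ContDiffOn ℝ n g (Icc a b) → ∀ {x : Fin (n + 1) → ℝ}, StrictMono x →
      (∀ i, x i ∈ Icc a b) → (∀ i, g (x i) = 0) →
      ∃ ξ ∈ Icc a b, iteratedDerivWithin n g (Icc a b) ξ = 0
  | 0, _, _, x, _, hxI, hz => ⟨x 0, hxI 0, by simpa using hz 0⟩
  | n + 1, g, hg, x, hx, hxI, hz => by
    obtain ⟨c, hc, hcI, hcz⟩ := exists_strictMono_zeros_derivWithin hg.continuousOn hx hxI hz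
    simp only [iteratedDerivWithin_succ']
    exact exists_iteratedDerivWithin_eq_zero hab
      (hg.derivWithin (uniqueDiffOn_Icc hab) (by norm_cast)) hc hcI hcz

theorem exists_iteratedDerivWithin_eq_factorial_mul_divDiff {n : ℕ} {a b : ℝ} (hab : a < b)
    {f : ℝ → ℝ} (hf : ContDiffOn ℝ n f (Icc a b)) {x : Fin (n + 1) → ℝ} (hx : StrictMono x)
    (hxI : ∀ i, x i ∈ Icc a b) :
    ∃ ξ ∈ Icc a b, iteratedDerivWithin n f (Icc a b) ξ = n ! * divDiff f n x := by
  set p := nevillePoly f n x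
  have hp : ContDiffOn ℝ n (fun t => p.eval t) (Icc a b) := by
    simpa using (p.contDiff_aeval (𝕜 := ℝ) n).contDiffOn
  obtain ⟨ξ, hξ, hzero⟩ := exists_iteratedDerivWithin_eq_zero hab
    (g := f - fun t => p.eval t) (hf.sub hp) hx hxI
    fun i => sub_eq_zero.2 (nevillePoly.eval_node f hx.injective i).symm
  refine ⟨ξ, hξ, ?_⟩
  rwa [iteratedDerivWithin_sub hξ (uniqueDiffOn_Icc hab) (hf ξ hξ) (hp ξ hξ), sub_eq_zero,
    iteratedDerivWithin_eval (uniqueDiffOn_Icc hab) hξ,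
    iterate_derivative_of_natDegree_le (nevillePoly.natDegree_le f n x), eval_C,
    nevillePoly.coeff_self] at hzero

/-- Popoviciu direction: if `f` is `n`-times continuously differentiable on `[a,b]`
with `f⁽ⁿ⁾ ≥ 0` on `[a,b]`, then every `n`-th order divided difference at distinct
increasing points of `[a,b]` is nonnegative. -/
theorem stmt_7 (n : ℕ) (a b : ℝ) (hab : a < b) (f : ℝ → ℝ)
    (hsmooth : ContDiffOn ℝ n f (Set.Icc a b))
    (hderiv : ∀ x ∈ Set.Icc a b, 0 ≤ iteratedDerivWithin n f (Set.Icc a b) x)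
    (x : Fin (n + 1) → ℝ) (hmono : StrictMono x)
    (hx0 : a ≤ x 0) (hxn : x (Fin.last n) ≤ b) :
    0 ≤ divDiff f n x := by
  have hxI (i : Fin (n + 1)) : x i ∈ Icc a b :=
    ⟨hx0.trans (hmono.monotone (Fin.zero_le i)), (hmono.monotone (Fin.le_last i)).trans hxn⟩
  obtain ⟨ξ, hξ, hmvt⟩ :=
    exists_iteratedDerivWithin_eq_factorial_mul_divDiff hab hsmooth hmono hxI
  exact nonneg_of_mul_nonneg_right (hmvt ▸ hderiv ξ hξ) (mod_cast n.factorial_pos)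
end

section
/- The NormalHedge potential φ(t,R) = (1/√(t+1))·exp(R²/(2(t+1))), defined for t > −1 and R ≥ 0, satisfies the backward heat equation ∂φ/∂t + (1/2)·∂²φ/∂R² = 0 on its domain {(t,R) : t > −1, R > 0}. -/
open Real

/-- The potential `φ(t, r)` written in the shifted time `s = t + 1`. -/
noncomputable def normalHedgePotential (s r : ℝ) : ℝ :=
  1 / √s * exp (r ^ 2 / (2 * s))

theorem hasDerivAt_normalHedgePotential_fst {s : ℝ} (r : ℝ) (hs : 0 < s) :
    HasDerivAt (fun s => normalHedgePotential s r)
      (-(normalHedgePotential s r * (s + r ^ 2) / (2 * s ^ 2))) s := by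
  have hsqrt : √s ≠ 0 := (sqrt_pos.mpr hs).ne'
  have hinv : HasDerivAt (fun s : ℝ => 1 / √s) (-(1 / (2 * √s)) / √s ^ 2) s := by
    simpa only [one_div] using (hasDerivAt_sqrt hs.ne').fun_inv hsqrt
  have hexp : HasDerivAt (fun s : ℝ => exp (r ^ 2 / (2 * s)))
      (exp (r ^ 2 / (2 * s)) * (-(r ^ 2 / 2) / s ^ 2)) s := by
    have := ((hasDerivAt_inv hs.ne').const_mul (r ^ 2 / 2)).exp
    simp only [← div_eq_mul_inv, div_div] at this
    exact this.congr_deriv (by ring)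
  refine (hinv.mul hexp).congr_deriv ?_
  simp only [normalHedgePotential]
  field_simp
  rw [sq_sqrt hs.le]
  ring

theorem hasDerivAt_normalHedgePotential_snd (s r : ℝ) :
    HasDerivAt (normalHedgePotential s) (normalHedgePotential s r * (r / s)) r := by
  have hquot : HasDerivAt (fun r : ℝ => r ^ 2 / (2 * s)) (r / s) r :=
    ((hasDerivAt_pow 2 r).div_const (2 * s)).congr_deriv (by norm_num; field_simp)
  exact (hquot.exp.const_mul (1 / √s)).congr_deriv (mul_assoc _ _ _).symm

theorem deriv_normalHedgePotential_snd (s : ℝ) :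
    deriv (normalHedgePotential s) = fun r => normalHedgePotential s r * (r / s) :=
  funext fun r => (hasDerivAt_normalHedgePotential_snd s r).deriv

theorem hasDerivAt_deriv_normalHedgePotential_snd (s r : ℝ) :
    HasDerivAt (deriv (normalHedgePotential s))
      (normalHedgePotential s r * ((r / s) ^ 2 + 1 / s)) r := by
  rw [deriv_normalHedgePotential_snd]
  exact ((hasDerivAt_normalHedgePotential_snd s r).mul
    ((hasDerivAt_id' r).div_const s)).congr_deriv (by ring)

theorem normalHedgePotential_backward_heat {s : ℝ} (r : ℝ) (hs : 0 < s) :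
    deriv (fun s => normalHedgePotential s r) s
      + 1 / 2 * deriv (deriv (normalHedgePotential s)) r = 0 := by
  rw [(hasDerivAt_normalHedgePotential_fst r hs).deriv,
    (hasDerivAt_deriv_normalHedgePotential_snd s r).deriv]
  field_simp
  ring

/-- The NormalHedge potential `φ(t,R) = (1/√(t+1))·exp(R²/(2(t+1)))` satisfies the
backward heat equation `∂φ/∂t + (1/2)·∂²φ/∂R² = 0` on `{t > −1, R > 0}`. -/
theorem stmt_13 :
    ∀ t R : ℝ, -1 < t → 0 < R →
      deriv (fun t' => (1 / Real.sqrt (t' + 1)) * Real.exp (R ^ 2 / (2 * (t' + 1)))) t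
        + (1 / 2) *
          deriv (deriv (fun r => (1 / Real.sqrt (t + 1)) * Real.exp (r ^ 2 / (2 * (t + 1))))) R
        = 0 := by
  intro t R ht _
  have htime : deriv (fun t' => normalHedgePotential (t' + 1) R) t
      = deriv (fun s => normalHedgePotential s R) (t + 1) :=
    deriv_comp_add_const (f := fun s => normalHedgePotential s R) (a := 1) (x := t)
  change deriv (fun t' => normalHedgePotential (t' + 1) R) t
    + 1 / 2 * deriv (deriv (normalHedgePotential (t + 1))) R = 0
  rw [htime]
  exact normalHedgePotential_backward_heat R (by linarith)
end
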